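/- arXiv:2207.08624 — 2 statements merged into one kernel-verified Lean document; each statement's English description precedes it below -/
import Mathlib

section
/- Let p ≥ 1, A ∈ (0,∞], and let u : (0,A) → [0,∞) be measurable with all superlevel sets {u > s} of finite Lebesgue measure, and let u* denote its decreasing rearrangement on (0,A). Then ∫₀^A t^{p-1} u*(t) dt ≤ ∫₀^A t^{p-1} u(t) dt. -/
open MeasureTheory
open scoped ENNReal

/-- The interval `(0, A)` for `A ∈ (0,∞]`, as a subset of `ℝ`. -/
def Iaa (A : ℝ≥0∞) : Set ℝ := {t : ℝ | 0 < t ∧ ENNReal.ofReal t < A}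

open Set

/-!
Both sides are computed by the layer cake formula for the measure `t ^ (p - 1) dt` on `(0, A)`,
which reduces the claim to a comparison of superlevel sets at each level `s > 0`. The superlevel
set `F` of the decreasing `v` is an initial interval of `(0, ∞)`, of the same Lebesgue measure `b`
as the superlevel set `E` of `u`. Since the weight is increasing, it is at most `b ^ (p - 1)` on
`(0, b] \ E` and at least `b ^ (p - 1)` on `E \ (0, b]`, two sets of equal measure; hence its
integral over `F ⊆ (0, b]` is at most its integral over `E`.
-/

theorem measurableSet_Iaa (A : ℝ≥0∞) : MeasurableSet (Iaa A) :=
  (measurableSet_lt measurable_const measurable_id).inter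
    (measurableSet_lt ENNReal.measurable_ofReal measurable_const)

theorem Ioc_subset_Iaa {A : ℝ≥0∞} {t : ℝ} (ht : t ∈ Iaa A) : Ioc 0 t ⊆ Iaa A :=
  fun _ hs => ⟨hs.1, (ENNReal.ofReal_le_ofReal hs.2).trans_lt ht.2⟩

theorem lintegral_mul_ofReal_eq_lintegral_setLIntegral_lt {α : Type*} [MeasurableSpace α]
    (μ : Measure α) [SFinite μ] {g : α → ℝ≥0∞} {w : α → ℝ} (hg : AEMeasurable g μ)
    (hw0 : 0 ≤ᵐ[μ] w) (hw : AEMeasurable w μ) :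
    ∫⁻ a, g a * ENNReal.ofReal (w a) ∂μ = ∫⁻ s in Ioi 0, ∫⁻ a in {a | s < w a}, g a ∂μ := by
  have hac := withDensity_absolutelyContinuous μ g
  refine (lintegral_withDensity_eq_lintegral_mul₀ hg hw.ennreal_ofReal).symm.trans ?_
  rw [lintegral_eq_lintegral_meas_lt _ (hac.ae_le hw0) (hw.mono' hac)]
  simp_rw [withDensity_apply']

theorem setLIntegral_Ioc_le_of_monotoneOn {g : ℝ → ℝ≥0∞} (hg : MonotoneOn g (Ici 0)) {b : ℝ}
    (hb : 0 ≤ b) {E : Set ℝ} (hE : MeasurableSet E) (hE0 : E ⊆ Ioi 0)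
    (hvol : volume E = ENNReal.ofReal b) :
    ∫⁻ t in Ioc 0 b, g t ≤ ∫⁻ t in E, g t := by
  set I := Ioc 0 b
  have hI : volume I = ENNReal.ofReal b := by rw [Real.volume_Ioc, sub_zero]
  have hdiff : volume (I \ E) = volume (E \ I) := by
    have hfin : volume (I ∩ E) ≠ ∞ :=
      (measure_mono inter_subset_left).trans_lt (hI ▸ ENNReal.ofReal_lt_top) |>.ne
    refine (ENNReal.add_left_inj hfin).mp ?_
    rw [measure_sdiff_add_inter I hE, inter_comm, measure_sdiff_add_inter E measurableSet_Ioc,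
      hI, hvol]
  have hup : ∫⁻ t in I \ E, g t ≤ g b * volume (I \ E) := by
    refine (setLIntegral_mono' (measurableSet_Ioc.diff hE) fun t ht => ?_).trans_eq
      (setLIntegral_const _ _)
    exact hg (le_of_lt ht.1.1) hb ht.1.2
  have hlow : g b * volume (E \ I) ≤ ∫⁻ t in E \ I, g t := by
    refine (setLIntegral_const _ _).symm.trans_le
      (setLIntegral_mono' (hE.diff measurableSet_Ioc) fun t ht => ?_)
    have ht0 : 0 < t := hE0 ht.1
    exact hg hb ht0.le (not_le.mp fun h => ht.2 ⟨ht0, h⟩).le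
  calc ∫⁻ t in I, g t = (∫⁻ t in I ∩ E, g t) + ∫⁻ t in I \ E, g t :=
        (lintegral_inter_add_sdiff g I hE).symm
    _ ≤ (∫⁻ t in E ∩ I, g t) + g b * volume (E \ I) := by
        rw [inter_comm, ← hdiff]; gcongr
    _ ≤ (∫⁻ t in E ∩ I, g t) + ∫⁻ t in E \ I, g t := by gcongr
    _ = ∫⁻ t in E, g t := lintegral_inter_add_sdiff g E measurableSet_Ioc

theorem exists_subset_Ioc_volume_eq {F : Set ℝ} (hF : ∀ t ∈ F, Ioc 0 t ⊆ F) (hF0 : F ⊆ Ioi 0)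
    (hfin : volume F ≠ ∞) : ∃ b, 0 ≤ b ∧ F ⊆ Ioc 0 b ∧ volume F = ENNReal.ofReal b := by
  rcases F.eq_empty_or_nonempty with rfl | ⟨t₀, ht₀⟩
  · exact ⟨0, le_rfl, empty_subset _, by simp⟩
  have hbdd : BddAbove F := by
    by_contra hunb
    refine hfin (top_unique ?_)
    calc ∞ = volume (Ioi (0 : ℝ)) := Real.volume_Ioi.symm
      _ ≤ volume F := measure_mono fun x hx => by
          obtain ⟨t, ht, hxt⟩ := not_bddAbove_iff.mp hunb x
          exact hF t ht ⟨hx, hxt.le⟩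
  set b := sSup F
  have hIoo : Ioo 0 b ⊆ F := fun x hx => by
    obtain ⟨t, ht, hxt⟩ := exists_lt_of_lt_csSup ⟨t₀, ht₀⟩ hx.2
    exact hF t ht ⟨hx.1, hxt.le⟩
  have hIoc : F ⊆ Ioc 0 b := fun t ht => ⟨hF0 ht, le_csSup hbdd ht⟩
  refine ⟨b, (hF0 ht₀).le.trans (le_csSup hbdd ht₀), hIoc, le_antisymm ?_ ?_⟩
  · simpa using measure_mono (μ := volume) hIoc
  · simpa using measure_mono (μ := volume) hIoo

theorem setLIntegral_le_of_volume_eq {g : ℝ → ℝ≥0∞} (hg : MonotoneOn g (Ici 0)) {E F : Set ℝ}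
    (hE : MeasurableSet E) (hE0 : E ⊆ Ioi 0) (hF : ∀ t ∈ F, Ioc 0 t ⊆ F) (hF0 : F ⊆ Ioi 0)
    (hEF : volume E = volume F) (hfin : volume E ≠ ∞) :
    ∫⁻ t in F, g t ≤ ∫⁻ t in E, g t := by
  obtain ⟨b, hb, hFb, hvol⟩ := exists_subset_Ioc_volume_eq hF hF0 (hEF ▸ hfin)
  exact (lintegral_mono_set hFb).trans
    (setLIntegral_Ioc_le_of_monotoneOn hg hb hE hE0 (hEF.trans hvol))

theorem stmt_5_general (p : ℝ) (hp : 1 ≤ p) (A : ℝ≥0∞)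
    (u v : ℝ → ℝ) (hum : Measurable u) (hupos : ∀ t ∈ Iaa A, 0 ≤ u t)
    (hfin : ∀ s > (0:ℝ), volume (Iaa A ∩ {t | s < u t}) < ⊤)
    -- `v` is the decreasing rearrangement `u*` of `u`: it is nonnegative, decreasing
    -- on `(0,A)` and equimeasurable with `u`
    (hv : AntitoneOn v (Iaa A)) (hvpos : ∀ t ∈ Iaa A, 0 ≤ v t)
    (hequi : ∀ s > (0:ℝ), volume (Iaa A ∩ {t | s < u t}) = volume (Iaa A ∩ {t | s < v t})) :
    ∫⁻ t in Iaa A, ENNReal.ofReal (t ^ (p - 1) * v t) ≤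
      ∫⁻ t in Iaa A, ENNReal.ofReal (t ^ (p - 1) * u t) := by
  set S := Iaa A
  have hS := measurableSet_Iaa A
  set g : ℝ → ℝ≥0∞ := fun t => ENNReal.ofReal (t ^ (p - 1))
  have hq : 0 ≤ p - 1 := by linarith
  have layer_cake : ∀ w : ℝ → ℝ, (∀ t ∈ S, 0 ≤ w t) → AEMeasurable w (volume.restrict S) →
      ∫⁻ t in S, ENNReal.ofReal (t ^ (p - 1) * w t) =
        ∫⁻ s in Ioi 0, ∫⁻ t in S ∩ {t | s < w t}, g t := by
    intro w hw0 hw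
    rw [setLIntegral_congr_fun hS fun t ht => ENNReal.ofReal_mul (Real.rpow_nonneg ht.1.le _),
      lintegral_mul_ofReal_eq_lintegral_setLIntegral_lt _
        (Real.continuous_rpow_const hq).measurable.ennreal_ofReal.aemeasurable
        (ae_restrict_of_forall_mem hS hw0) hw]
    simp_rw [Measure.restrict_restrict' hS, inter_comm]
    rfl
  rw [layer_cake v hvpos (aemeasurable_restrict_of_antitoneOn hS hv),
    layer_cake u hupos hum.aemeasurable.restrict]
  refine setLIntegral_mono' measurableSet_Ioi fun s hs => ?_
  refine setLIntegral_le_of_volume_eq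
    (fun x hx y _ hxy => ENNReal.ofReal_le_ofReal (Real.rpow_le_rpow hx hxy hq))
    (hS.inter (measurableSet_lt measurable_const hum)) (fun t ht => ht.1.1)
    (fun t ht x hx =>
      ⟨Ioc_subset_Iaa ht.1 hx, ht.2.trans_le (hv (Ioc_subset_Iaa ht.1 hx) ht.1 hx.2)⟩)
    (fun t ht => ht.1.1) (hequi s hs) (hfin s hs).ne

theorem stmt_5 (p : ℝ) (hp : 1 ≤ p) (A : ℝ≥0∞) (hA : 0 < A)
    (u v : ℝ → ℝ) (hum : Measurable u) (hupos : ∀ t ∈ Iaa A, 0 ≤ u t)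
    (hfin : ∀ s > (0:ℝ), volume (Iaa A ∩ {t | s < u t}) < ⊤)
    -- `v` is the decreasing rearrangement `u*` of `u`: it is nonnegative, decreasing
    -- on `(0,A)` and equimeasurable with `u`
    (hv : AntitoneOn v (Iaa A)) (hvpos : ∀ t ∈ Iaa A, 0 ≤ v t)
    (hequi : ∀ s > (0:ℝ), volume (Iaa A ∩ {t | s < u t}) = volume (Iaa A ∩ {t | s < v t})) :
    ∫⁻ t in Iaa A, ENNReal.ofReal (t ^ (p - 1) * v t) ≤
      ∫⁻ t in Iaa A, ENNReal.ofReal (t ^ (p - 1) * u t) :=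
  stmt_5_general p hp A u v hum hupos hfin hv hvpos hequi
end

section
/- For p > 1 and integer d ≥ 1, the integral ∫₀^1 G((-log τ^{p-1})^d / d!) dτ equals ((p-1)/p)^d, where G(s) = ∫₀^s exp(-(d!·σ)^{1/d}) dσ. -/
open MeasureTheory

/-- The concentration function `G(s) = ∫₀ˢ exp(-(d!·σ)^{1/d}) dσ`. -/
noncomputable def G (d : ℕ) (s : ℝ) : ℝ :=
  ∫ σ in (0:ℝ)..s, Real.exp (-(((d.factorial : ℝ) * σ) ^ ((1:ℝ) / (d : ℝ))))

namespace Stmt9Aux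

open Real Set Filter Topology

/-- The integrand of `G`. -/
noncomputable def g (d : ℕ) (σ : ℝ) : ℝ :=
  Real.exp (-(((d.factorial : ℝ) * σ) ^ ((1:ℝ) / (d : ℝ))))

lemma g_cont (d : ℕ) : Continuous (g d) := by
  have h : Continuous fun σ : ℝ => ((d.factorial : ℝ) * σ) ^ ((1:ℝ) / (d : ℝ)) :=
    (Real.continuous_rpow_const (by positivity)).comp (continuous_const.mul continuous_id)
  exact Real.continuous_exp.comp h.neg

lemma G_eq (d : ℕ) (s : ℝ) : G d s = ∫ σ in (0:ℝ)..s, g d σ := rfl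

lemma G_hasDerivAt (d : ℕ) (s : ℝ) : HasDerivAt (G d) (g d s) s := by
  have hc := g_cont d
  exact intervalIntegral.integral_hasDerivAt_right (hc.intervalIntegrable _ _)
    hc.stronglyMeasurable.stronglyMeasurableAtFilter hc.continuousAt

lemma G_nonneg (d : ℕ) {s : ℝ} (hs : 0 ≤ s) : 0 ≤ G d s :=
  intervalIntegral.integral_nonneg hs fun x _ => (Real.exp_pos _).le

lemma g_integrableOn (d : ℕ) (hd : 1 ≤ d) : IntegrableOn (g d) (Ioi 0) := by
  have hd0 : ((d : ℝ)) ≠ 0 := Nat.cast_ne_zero.mpr (by omega)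
  have hc : (0:ℝ) < (d.factorial : ℝ) := Nat.cast_pos.mpr d.factorial_pos
  set h : ℝ → ℝ := fun x => Real.exp (-(x ^ ((1:ℝ) / (d : ℝ)))) with hh
  have hg : g d = fun σ => h ((d.factorial : ℝ) * σ) := rfl
  rw [hg]
  have hiff := integrableOn_Ioi_comp_mul_left_iff h 0 hc
  rw [mul_zero] at hiff
  rw [hiff, ← integrableOn_Ioi_comp_rpow_iff h hd0]
  have hbase : IntegrableOn (fun x : ℝ => (d : ℝ) * (Real.exp (-x) * x ^ ((d:ℝ) - 1))) (Ioi 0) :=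
    (Real.GammaIntegral_convergent (by positivity : (0:ℝ) < d)).const_mul _
  refine hbase.congr_fun (fun x hx => ?_) measurableSet_Ioi
  have hx0 : (0:ℝ) < x := hx
  have hxd : (x ^ ((d:ℝ))) ^ ((1:ℝ)/(d:ℝ)) = x := by
    rw [← Real.rpow_mul hx0.le, mul_one_div_cancel hd0, Real.rpow_one]
  simp only [hh, smul_eq_mul, hxd, abs_of_nonneg (Nat.cast_nonneg d : (0:ℝ) ≤ d)]
  ring

lemma g_integral (d : ℕ) (hd : 1 ≤ d) : ∫ σ in Ioi (0:ℝ), g d σ = 1 := by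
  have hd0 : ((d : ℝ)) ≠ 0 := Nat.cast_ne_zero.mpr (by omega)
  have hc : (0:ℝ) < (d.factorial : ℝ) := Nat.cast_pos.mpr d.factorial_pos
  have hb : (0:ℝ) < (d.factorial : ℝ) ^ ((1:ℝ)/(d:ℝ)) := Real.rpow_pos_of_pos hc _
  have step1 : ∫ σ in Ioi (0:ℝ), g d σ
      = ∫ σ in Ioi (0:ℝ), Real.exp (-((d.factorial : ℝ) ^ ((1:ℝ)/(d:ℝ))) * σ ^ ((1:ℝ)/(d:ℝ))) := by
    refine setIntegral_congr_fun measurableSet_Ioi (fun x hx => ?_)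
    have hx0 : (0:ℝ) < x := hx
    unfold g
    rw [Real.mul_rpow hc.le hx0.le, neg_mul]
  rw [step1, integral_exp_neg_mul_rpow (by positivity) hb]
  rw [one_div_one_div]
  have h1 : (-1 : ℝ) / ((1:ℝ)/(d:ℝ)) = -(d:ℝ) := by
    field_simp
  rw [h1, ← Real.rpow_mul hc.le]
  have h2 : (1:ℝ)/(d:ℝ) * (-(d:ℝ)) = -1 := by field_simp
  rw [h2, Real.rpow_neg_one, Real.Gamma_nat_eq_factorial d, inv_mul_cancel₀ hc.ne']

lemma G_le_one (d : ℕ) (hd : 1 ≤ d) (s : ℝ) : G d s ≤ 1 := by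
  rcases le_or_gt s 0 with h | h
  · have h2 : G d s ≤ 0 := by
      rw [G_eq, ← neg_nonneg, ← intervalIntegral.integral_symm]
      exact intervalIntegral.integral_nonneg h fun x _ => (Real.exp_pos _).le
    linarith
  · rw [G_eq, intervalIntegral.integral_of_le h.le, ← g_integral d hd]
    exact setIntegral_mono_set (g_integrableOn d hd)
      (Eventually.of_forall fun x => (Real.exp_pos _).le)
      (HasSubset.Subset.eventuallyLE Ioc_subset_Ioi_self)

lemma G_tendsto (d : ℕ) (hd : 1 ≤ d) : Tendsto (G d) atTop (𝓝 1) := by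
  have h := MeasureTheory.intervalIntegral_tendsto_integral_Ioi 0 (g_integrableOn d hd) tendsto_id
  rw [g_integral d hd] at h
  exact h

lemma pow_div_rpow (d : ℕ) (hd : 1 ≤ d) {a : ℝ} (ha : 0 ≤ a) :
    ((d.factorial : ℝ) * (a ^ d / (d.factorial : ℝ))) ^ ((1:ℝ) / (d:ℝ)) = a := by
  have hd0 : ((d : ℝ)) ≠ 0 := Nat.cast_ne_zero.mpr (by omega)
  have hc : (0:ℝ) < (d.factorial : ℝ) := Nat.cast_pos.mpr d.factorial_pos
  rw [mul_div_cancel₀ _ hc.ne', ← Real.rpow_natCast a d, ← Real.rpow_mul ha,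
    mul_one_div_cancel hd0, Real.rpow_one]

end Stmt9Aux

open Stmt9Aux Real Set Filter Topology

theorem stmt_9 (p : ℝ) (hp : 1 < p) (d : ℕ) (hd : 1 ≤ d) :
    ∫ τ in (0:ℝ)..1, G d ((-Real.log (τ ^ (p - 1))) ^ d / (d.factorial : ℝ))
      = ((p - 1) / p) ^ d := by
  obtain ⟨k, rfl⟩ : ∃ k, d = k + 1 := ⟨d - 1, (Nat.succ_pred_eq_of_pos hd).symm⟩
  clear hd
  have hd : 1 ≤ k + 1 := by omega
  have hp0 : (0:ℝ) < p := by linarith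
  have hκ : (0:ℝ) < p - 1 := by linarith
  set c : ℝ := ((k+1).factorial : ℝ) with hc_def
  have hc : (0:ℝ) < c := by
    rw [hc_def]; exact_mod_cast Nat.factorial_pos _
  set res : ℝ := ((p - 1) / p) ^ (k+1) with hres_def
  set F : ℝ → ℝ := fun x => x * G (k+1) (((p-1) * -Real.log x) ^ (k+1) / c)
      - res * G (k+1) ((p * -Real.log x) ^ (k+1) / c) with hF
  -- the derivative of F on (0, 1]
  have hderiv : ∀ x : ℝ, 0 < x → x ≤ 1 →
      HasDerivAt F (G (k+1) ((-Real.log (x ^ (p-1))) ^ (k+1) / c)) x := by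
    intro x hx hx1
    have harg : -Real.log (x ^ (p-1)) = (p-1) * -Real.log x := by
      rw [Real.log_rpow hx]; ring
    have hL : 0 ≤ -Real.log x := neg_nonneg.mpr (Real.log_nonpos hx.le hx1)
    have hlogderiv : HasDerivAt (fun y : ℝ => -Real.log y) (-x⁻¹) x :=
      (Real.hasDerivAt_log hx.ne').neg
    have h1 : HasDerivAt (fun y : ℝ => ((p-1) * -Real.log y) ^ (k+1) / c)
        ((((k:ℝ)+1) * ((p-1) * -Real.log x) ^ k * ((p-1) * -x⁻¹)) / c) x := by
      have := ((hlogderiv.const_mul (p-1)).pow (k+1)).div_const c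
      simpa using this
    have h2 : HasDerivAt (fun y : ℝ => (p * -Real.log y) ^ (k+1) / c)
        ((((k:ℝ)+1) * (p * -Real.log x) ^ k * (p * -x⁻¹)) / c) x := by
      have := ((hlogderiv.const_mul p).pow (k+1)).div_const c
      simpa using this
    have hG1 := (G_hasDerivAt (k+1) (((p-1) * -Real.log x) ^ (k+1) / c)).comp x h1
    have hG2 := (G_hasDerivAt (k+1) ((p * -Real.log x) ^ (k+1) / c)).comp x h2
    have hF' := ((hasDerivAt_id x).mul hG1).sub (hG2.const_mul res)
    have hFd : HasDerivAt F
        ((1 * (G (k+1) ∘ fun y : ℝ => ((p-1) * -Real.log y) ^ (k+1) / c) x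
            + x * (g (k+1) (((p-1) * -Real.log x) ^ (k+1) / c)
              * ((((k:ℝ)+1) * ((p-1) * -Real.log x) ^ k * ((p-1) * -x⁻¹)) / c)))
          - res * (g (k+1) ((p * -Real.log x) ^ (k+1) / c)
              * ((((k:ℝ)+1) * (p * -Real.log x) ^ k * (p * -x⁻¹)) / c))) x := hF'
    have e1 : g (k+1) (((p-1) * -Real.log x) ^ (k+1) / c)
        = Real.exp (-((p-1) * -Real.log x)) := by
      unfold g
      rw [← hc_def, pow_div_rpow (k+1) hd (mul_nonneg hκ.le hL)]
    have e2 : g (k+1) ((p * -Real.log x) ^ (k+1) / c)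
        = Real.exp (-((p-1) * -Real.log x)) * x := by
      unfold g
      rw [← hc_def, pow_div_rpow (k+1) hd (mul_nonneg hp0.le hL)]
      have h3 : -(p * -Real.log x) = -((p-1) * -Real.log x) + Real.log x := by ring
      rw [h3, Real.exp_add, Real.exp_log hx]
    rw [e1, e2] at hFd
    convert hFd using 1
    rw [harg]
    show G (k+1) (((p-1) * -Real.log x) ^ (k+1) / c) = _
    simp only [Function.comp, one_mul, hres_def, mul_pow, div_pow]
    field_simp
    ring
  have hG0 : G (k+1) 0 = 0 := intervalIntegral.integral_same
  have hF1 : F 1 = 0 := by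
    simp [hF, Real.log_one, hG0]
  -- FTC on [ε, 1]
  have key : ∀ ε : ℝ, 0 < ε → ε ≤ 1 →
      ∫ τ in ε..1, G (k+1) ((-Real.log (τ ^ (p-1))) ^ (k+1) / c) = F 1 - F ε := by
    intro ε hε hε1
    apply intervalIntegral.integral_eq_sub_of_hasDerivAt
    · intro x hx
      rw [Set.uIcc_of_le hε1] at hx
      exact hderiv x (lt_of_lt_of_le hε hx.1) hx.2
    · apply ContinuousOn.intervalIntegrable
      intro x hx
      rw [Set.uIcc_of_le hε1] at hx
      have hx0 : 0 < x := lt_of_lt_of_le hε hx.1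
      apply ContinuousAt.continuousWithinAt
      have hin : ContinuousAt (fun τ : ℝ => (-Real.log (τ ^ (p-1))) ^ (k+1) / c) x := by
        have c1 : ContinuousAt (fun τ : ℝ => τ ^ (p-1)) x :=
          Real.continuousAt_rpow_const x _ (Or.inl hx0.ne')
        have c2 : ContinuousAt Real.log (x ^ (p-1)) :=
          Real.continuousAt_log (Real.rpow_pos_of_pos hx0 _).ne'
        have c3 := ContinuousAt.comp' (g := Real.log) (f := fun τ : ℝ => τ ^ (p-1)) c2 c1
        exact ((c3.neg).pow _).div_const _
      exact ((G_hasDerivAt (k+1) _).continuousAt.comp hin)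
  -- pointwise bound
  have hbound : ∀ x : ℝ, 0 < x → x ≤ 1 →
      ‖G (k+1) ((-Real.log (x ^ (p-1))) ^ (k+1) / c)‖ ≤ 1 := by
    intro x hx hx1
    have hL : 0 ≤ -Real.log x := neg_nonneg.mpr (Real.log_nonpos hx.le hx1)
    have harg : 0 ≤ (-Real.log (x ^ (p-1))) ^ (k+1) / c := by
      apply div_nonneg _ hc.le
      apply pow_nonneg
      rw [Real.log_rpow hx]
      have h4 : -((p-1) * Real.log x) = (p-1) * -Real.log x := by ring
      rw [h4]
      exact mul_nonneg hκ.le hL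
    rw [Real.norm_eq_abs, abs_of_nonneg (G_nonneg _ harg)]
    exact G_le_one _ hd _
  -- interval integrability on [0, 1]
  have hInt : IntervalIntegrable
      (fun τ => G (k+1) ((-Real.log (τ ^ (p-1))) ^ (k+1) / c)) volume 0 1 := by
    rw [intervalIntegrable_iff, Set.uIoc_of_le (zero_le_one' ℝ)]
    apply Measure.integrableOn_of_bounded (M := 1) measure_Ioc_lt_top.ne
    · apply Measurable.aestronglyMeasurable
      have hGc : Continuous (G (k+1)) :=
        continuous_iff_continuousAt.mpr fun s => (G_hasDerivAt (k+1) s).continuousAt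
      have m1 : Measurable fun τ : ℝ => (-Real.log (τ ^ (p-1))) ^ (k+1) / c :=
        (((Real.measurable_log.comp
          (Real.continuous_rpow_const (by linarith : (0:ℝ) ≤ p - 1)).measurable).neg).pow_const
            _).div_const _
      exact hGc.measurable.comp m1
    · filter_upwards [ae_restrict_mem measurableSet_Ioc] with x hx
      exact hbound x hx.1 hx.2
  have hev : ∀ᶠ ε in 𝓝[>] (0:ℝ), ε ∈ Set.Ioo (0:ℝ) 1 :=
    Ioo_mem_nhdsGT_of_mem (by simp)
  -- limits
  have hGtend := G_tendsto (k+1) hd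
  have inner_tend : Tendsto (fun ε : ℝ => (p * -Real.log ε) ^ (k+1) / c)
      (𝓝[>] 0) atTop := by
    have l1 : Tendsto (fun ε : ℝ => -Real.log ε) (𝓝[>] (0:ℝ)) atTop :=
      tendsto_neg_atBot_atTop.comp Real.tendsto_log_nhdsGT_zero
    have l2 : Tendsto (fun ε : ℝ => p * -Real.log ε) (𝓝[>] (0:ℝ)) atTop :=
      l1.const_mul_atTop hp0
    have l3 : Tendsto (fun ε : ℝ => (p * -Real.log ε) ^ (k+1)) (𝓝[>] (0:ℝ)) atTop :=
      (tendsto_pow_atTop (by omega)).comp l2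
    exact l3.atTop_div_const hc
  have h1 : Tendsto (fun ε : ℝ => res * G (k+1) ((p * -Real.log ε) ^ (k+1) / c))
      (𝓝[>] 0) (𝓝 (res * 1)) := (hGtend.comp inner_tend).const_mul res
  have h2 : Tendsto (fun ε : ℝ => ε * G (k+1) (((p-1) * -Real.log ε) ^ (k+1) / c))
      (𝓝[>] 0) (𝓝 0) := by
    apply squeeze_zero'
    · filter_upwards [hev] with ε hε
      have hL : 0 ≤ -Real.log ε := neg_nonneg.mpr (Real.log_nonpos hε.1.le hε.2.le)
      exact mul_nonneg hε.1.le
        (G_nonneg _ (div_nonneg (pow_nonneg (mul_nonneg hκ.le hL) _) hc.le))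
    · filter_upwards [hev] with ε hε
      calc ε * G (k+1) (((p-1) * -Real.log ε) ^ (k+1) / c) ≤ ε * 1 :=
            mul_le_mul_of_nonneg_left (G_le_one _ hd _) hε.1.le
        _ = ε := mul_one ε
    · exact tendsto_id.mono_left nhdsWithin_le_nhds
  have hRHS : Tendsto (fun ε => F 1 - F ε) (𝓝[>] (0:ℝ)) (𝓝 res) := by
    have heq : (fun ε : ℝ => F 1 - F ε)
        = fun ε : ℝ => res * G (k+1) ((p * -Real.log ε) ^ (k+1) / c)
            - ε * G (k+1) (((p-1) * -Real.log ε) ^ (k+1) / c) := by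
      funext ε
      rw [hF1, hF]
      ring
    rw [heq]
    have := h1.sub h2
    simpa using this
  have hsmall : Tendsto (fun ε : ℝ => ∫ τ in (0:ℝ)..ε,
      G (k+1) ((-Real.log (τ ^ (p-1))) ^ (k+1) / c)) (𝓝[>] (0:ℝ)) (𝓝 0) := by
    apply squeeze_zero_norm'
    · filter_upwards [hev] with ε hε
      have hb := intervalIntegral.norm_integral_le_of_norm_le_const (C := 1)
        (f := fun τ => G (k+1) ((-Real.log (τ ^ (p-1))) ^ (k+1) / c))
        (a := (0:ℝ)) (b := ε) ?_
      · calc ‖∫ τ in (0:ℝ)..ε, G (k+1) ((-Real.log (τ ^ (p-1))) ^ (k+1) / c)‖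
            ≤ 1 * |ε - 0| := hb
          _ = ε := by rw [one_mul, sub_zero, abs_of_pos hε.1]
      · intro x hx
        rw [Set.uIoc_of_le hε.1.le] at hx
        exact hbound x hx.1 (hx.2.trans hε.2.le)
    · exact tendsto_id.mono_left nhdsWithin_le_nhds
  have hLHS : Tendsto (fun ε : ℝ => ∫ τ in ε..1,
      G (k+1) ((-Real.log (τ ^ (p-1))) ^ (k+1) / c)) (𝓝[>] (0:ℝ))
      (𝓝 (∫ τ in (0:ℝ)..1, G (k+1) ((-Real.log (τ ^ (p-1))) ^ (k+1) / c))) := by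
    have heq : ∀ᶠ ε in 𝓝[>] (0:ℝ),
        (∫ τ in (0:ℝ)..1, G (k+1) ((-Real.log (τ ^ (p-1))) ^ (k+1) / c))
          - (∫ τ in (0:ℝ)..ε, G (k+1) ((-Real.log (τ ^ (p-1))) ^ (k+1) / c))
        = ∫ τ in ε..1, G (k+1) ((-Real.log (τ ^ (p-1))) ^ (k+1) / c) := by
      filter_upwards [hev] with ε hε
      apply intervalIntegral.integral_interval_sub_left hInt
      apply hInt.mono_set
      rw [Set.uIcc_of_le hε.1.le, Set.uIcc_of_le (zero_le_one' ℝ)]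
      exact Set.Icc_subset_Icc le_rfl hε.2.le
    have := (tendsto_const_nhds.sub hsmall).congr' heq
    simpa using this
  have hfin : Tendsto (fun ε => F 1 - F ε) (𝓝[>] (0:ℝ))
      (𝓝 (∫ τ in (0:ℝ)..1, G (k+1) ((-Real.log (τ ^ (p-1))) ^ (k+1) / c))) := by
    apply hLHS.congr'
    filter_upwards [hev] with ε hε
    exact key ε hε.1 hε.2.le
  exact (tendsto_nhds_unique hfin hRHS)
end
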